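/- Let p be a prime, A a commutative ring of characteristic p, k ∈ ℕ, B = MvPolynomial (Fin k) A, and let E be a B-module with a stratification (∇_n)_{n : Fin k →₀ ℕ} relative to A. Define E^{(1)} = {e ∈ E | ∇_n e = 0 for all n with 0 < |n| < p}, where |n| = Σ i, n i. Then E^{(1)} is stable under multiplication by p-th powers: for every f ∈ B and e ∈ E^{(1)}, also f^p • e ∈ E^{(1)}. -/

import Mathlib

/-- The divided-power operator `D_n` on `MvPolynomial σ R`, determined on monomials by
`D_n (X ^ m) = (∏ i, Nat.choose (m i) (n i)) • X ^ (m - n)` (componentwise truncated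
subtraction). -/
noncomputable def dpOp (R : Type*) [CommRing R] (σ : Type*) [Fintype σ] (n : σ →₀ ℕ) :
    MvPolynomial σ R →ₗ[R] MvPolynomial σ R :=
  (Finsupp.lsum ℕ fun m : σ →₀ ℕ =>
    (∏ i, Nat.choose (m i) (n i)) • (MvPolynomial.monomial (m - n) : R →ₗ[R] MvPolynomial σ R))
    ∘ₗ (AddMonoidAlgebra.coeffLinearEquiv R).toLinearMap

/-- A stratification of a `MvPolynomial (Fin k) A`-module `E` relative to `A`: a family of
`A`-linear endomorphisms `∇_n` with `∇_0 = id` satisfying the generalized Leibniz rule with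
respect to the divided-power operators `D_l`. -/
structure Stratification (A : Type*) [CommRing A] (k : ℕ)
    (E : Type*) [AddCommGroup E] [Module (MvPolynomial (Fin k) A) E]
    [Module A E] [IsScalarTower A (MvPolynomial (Fin k) A) E] where
  op : (Fin k →₀ ℕ) → E →ₗ[A] E
  op_zero : op 0 = LinearMap.id
  leibniz : ∀ (n : Fin k →₀ ℕ) (f : MvPolynomial (Fin k) A) (e : E),
    op n (f • e) = ∑ l ∈ Finset.Iic n, dpOp A (Fin k) l f • op (n - l) e

/-! By the Leibniz rule, `∇_n (f ^ p • e) = ∑_{l ≤ n} D_l (f ^ p) • ∇_{n - l} e`. The term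
`l = 0` vanishes because `e ∈ E⁽¹⁾`. For `0 < l ≤ n` every `l i < p`, and `D_l (f ^ p) = 0`: in
characteristic `p`, `f ^ p` is a combination of monomials `X ^ (p • m)`, and by Lucas's theorem
`p ∣ choose (p * m j) (l j)` for any `j` with `l j ≠ 0`. -/

open Finset MvPolynomial

theorem Nat.Prime.dvd_choose_mul {p l : ℕ} (hp : p.Prime) (m : ℕ) (hl : l ≠ 0) (hlp : l < p) :
    p ∣ (p * m).choose l := by
  have := Fact.mk hp
  have lucas := Choose.choose_modEq_choose_mod_mul_choose_div_nat (n := p * m) (k := l) (p := p)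
  rw [Nat.mul_mod_right, Nat.mod_eq_of_lt hlp, Nat.choose_eq_zero_of_lt (Nat.pos_of_ne_zero hl),
    zero_mul] at lucas
  exact Nat.modEq_zero_iff_dvd.mp lucas

theorem dpOp_monomial {R σ : Type*} [CommRing R] [Fintype σ] (n m : σ →₀ ℕ) (a : R) :
    dpOp R σ n (monomial m a) = (∏ i, (m i).choose (n i)) • monomial (m - n) a := by
  simp [dpOp]

theorem dpOp_pow_char_eq_zero {R σ : Type*} [CommRing R] [Fintype σ] {p : ℕ} (hp : p.Prime)
    [CharP R p] (f : MvPolynomial σ R) {l : σ →₀ ℕ} (hl : l ≠ 0) (hlp : ∀ i, l i < p) :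
    dpOp R σ l (f ^ p) = 0 := by
  have := Fact.mk hp
  obtain ⟨j, hj⟩ := Finsupp.ne_iff.mp hl
  rw [f.as_sum, sum_pow_char, map_sum]
  refine sum_eq_zero fun m _ => ?_
  have hdvd : p ∣ ∏ i, ((p • m) i).choose (l i) := by
    refine dvd_trans ?_ (dvd_prod_of_mem _ (mem_univ j))
    simpa using hp.dvd_choose_mul (m j) hj (hlp j)
  rw [monomial_pow, dpOp_monomial, ← Nat.cast_smul_eq_nsmul (MvPolynomial σ R),
    (CharP.cast_eq_zero_iff _ p _).mpr hdvd, zero_smul]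

/-- `E⁽¹⁾ = (e | ∇_n e = 0 for all 0 < |n| < p)` is stable under multiplication by
`p`-th powers. -/
theorem stratification_e1_stable_pth_powers (p : ℕ) (hp : p.Prime)
    (A : Type*) [CommRing A] [CharP A p] (k : ℕ)
    (E : Type*) [AddCommGroup E] [Module (MvPolynomial (Fin k) A) E]
    [Module A E] [IsScalarTower A (MvPolynomial (Fin k) A) E]
    (S : Stratification A k E) (f : MvPolynomial (Fin k) A) (e : E)
    (he : ∀ n : Fin k →₀ ℕ, 0 < ∑ i, n i → ∑ i, n i < p → S.op n e = 0) :
    ∀ n : Fin k →₀ ℕ, 0 < ∑ i, n i → ∑ i, n i < p → S.op n (f ^ p • e) = 0 := by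
  intro n hn0 hnp
  rw [S.leibniz]
  refine sum_eq_zero fun l hl => ?_
  rcases eq_or_ne l 0 with rfl | hl0
  · rw [tsub_zero, he n hn0 hnp, smul_zero]
  · have hlp : ∀ i, l i < p := fun i =>
      (mem_Iic.mp hl i).trans_lt <|
        (single_le_sum (fun _ _ => Nat.zero_le _) (mem_univ i)).trans_lt hnp
    rw [dpOp_pow_char_eq_zero hp f hl0 hlp, zero_smul]
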